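/- arXiv:2509.14809 — 2 statements merged into one kernel-verified Lean document; each statement's English description precedes it below -/
import Mathlib

section
/- Let 0 < β < 1/2 and η > 0. For ρ > 0 define P̄(ρ) = ∫_0^∞ ∫_0^∞ 1{(1 + βρ y/((ρ/η) x + 1))·(1 + βρ y) ≤ 1 + ρ y} · e^{-(x+y)} dy dx, i.e., the FSIC failure probability with ρ_n = ρ and ρ_m = ρ/η. Then P̄(ρ) tends to (1-β)/(β²η + (1-β)) as ρ → ∞. -/
/-!
For `x > 0` the failure event in `y > 0` is the interval `y ≤ a / ρ + b x`, with
`a = (1 - 2β) / β²` and `b = (1 - β) / (β² η)`: clearing the denominator leaves a quadratic in `y`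
with roots `0` and that threshold. Integrating the exponential density over this region gives
`P̄(ρ) = 1 - e^{-a/ρ} / (1 + b)` exactly, which tends to `b / (1 + b)`.
-/

open MeasureTheory Real Filter Set

theorem integral_exp_neg (a b : ℝ) : ∫ z in a..b, exp (-z) = exp (-a) - exp (-b) := by
  rw [intervalIntegral.integral_comp_neg (fun z => exp z), integral_exp]

theorem setIntegral_Ioi_ite_le_exp_neg_add (x : ℝ) {T : ℝ} (hT : 0 ≤ T) :
    ∫ y in Ioi 0, (if y ≤ T then exp (-(x + y)) else 0) = exp (-x) - exp (-(x + T)) := by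
  have hindicator : ∫ y in Ioi 0, (if y ≤ T then exp (-(x + y)) else 0)
      = ∫ y in Ioi 0, (Iic T).indicator (fun y => exp (-(x + y))) y := rfl
  rw [hindicator, setIntegral_indicator measurableSet_Iic, Ioi_inter_Iic,
    ← intervalIntegral.integral_of_le hT,
    intervalIntegral.integral_comp_add_left (fun z => exp (-z)), integral_exp_neg, add_zero]

theorem integral_Ioi_exp_neg_sub_exp_neg_affine (a : ℝ) {c : ℝ} (hc : 0 < c) :
    ∫ x in Ioi 0, (exp (-x) - exp (-(a + c * x))) = 1 - exp (-a) / c := by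
  have hsplit : ∀ x, exp (-(a + c * x)) = exp (-a) * exp (-c * x) := fun x => by
    rw [← exp_add]; ring_nf
  have hint : IntegrableOn (fun x => exp (-c * x)) (Ioi 0) :=
    integrableOn_exp_mul_Ioi (neg_neg_of_pos hc) 0
  simp_rw [hsplit]
  rw [integral_sub (integrableOn_exp_neg_Ioi 0) (hint.const_mul _), integral_exp_neg_Ioi_zero,
    integral_const_mul, integral_exp_mul_Ioi (neg_neg_of_pos hc), mul_zero, exp_zero]
  field_simp

theorem fsic_failure_condition_iff {β η ρ x y : ℝ} (hβ : β ≠ 0) (hη : 0 < η) (hρ : 0 < ρ)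
    (hx : 0 ≤ x) (hy : 0 < y) :
    (1 + β * ρ * y / ((ρ / η) * x + 1)) * (1 + β * ρ * y) ≤ 1 + ρ * y ↔
      y ≤ (1 - 2 * β) / (β ^ 2 * ρ) + (1 - β) / (β ^ 2 * η) * x := by
  have hD : 0 < (ρ / η) * x + 1 := by positivity
  have hc : 0 < ρ * y * (β ^ 2 * ρ) := by positivity
  have hfactor : ((ρ / η) * x + 1 + β * ρ * y) * (1 + β * ρ * y) - (1 + ρ * y) * ((ρ / η) * x + 1)
      = ρ * y * (β ^ 2 * ρ) * (y - ((1 - 2 * β) / (β ^ 2 * ρ) + (1 - β) / (β ^ 2 * η) * x)) := by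
    field_simp
    ring
  rw [one_add_div hD.ne', div_mul_eq_mul_div, div_le_iff₀ hD, ← sub_nonpos, hfactor,
    ← mul_zero (ρ * y * (β ^ 2 * ρ)), mul_le_mul_iff_right₀ hc, sub_nonpos]

theorem fsic_failure_probability_eq {β η ρ : ℝ} (hβ0 : 0 < β) (hβ1 : β < 1 / 2) (hη : 0 < η)
    (hρ : 0 < ρ) :
    ∫ x in Ioi (0:ℝ), ∫ y in Ioi (0:ℝ),
        (if (1 + β * ρ * y / ((ρ / η) * x + 1)) * (1 + β * ρ * y) ≤ 1 + ρ * y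
          then exp (-(x + y)) else 0)
      = 1 - exp (-((1 - 2 * β) / (β ^ 2 * ρ))) / (1 + (1 - β) / (β ^ 2 * η)) := by
  set a := (1 - 2 * β) / (β ^ 2 * ρ)
  set b := (1 - β) / (β ^ 2 * η)
  have ha : 0 < a := div_pos (by linarith) (by positivity)
  have hb : 0 < b := div_pos (by linarith) (by positivity)
  have hinner : EqOn (fun x => ∫ y in Ioi (0:ℝ),
        (if (1 + β * ρ * y / ((ρ / η) * x + 1)) * (1 + β * ρ * y) ≤ 1 + ρ * y
          then exp (-(x + y)) else 0))
      (fun x => exp (-x) - exp (-(a + (1 + b) * x))) (Ioi 0) := by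
    intro x (hx : 0 < x)
    have hT : 0 ≤ a + b * x := by positivity
    calc _ = ∫ y in Ioi (0:ℝ), (if y ≤ a + b * x then exp (-(x + y)) else 0) :=
          setIntegral_congr_fun measurableSet_Ioi fun y (hy : 0 < y) =>
            if_congr (fsic_failure_condition_iff hβ0.ne' hη hρ hx.le hy) rfl rfl
      _ = exp (-x) - exp (-(a + (1 + b) * x)) := by
          rw [setIntegral_Ioi_ite_le_exp_neg_add x hT]
          ring_nf
  rw [setIntegral_congr_fun measurableSet_Ioi hinner,
    integral_Ioi_exp_neg_sub_exp_neg_affine a (by linarith)]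

theorem fsic_failure_probability_limit
    (β η : ℝ) (hβ0 : 0 < β) (hβ1 : β < 1/2) (hη : 0 < η) :
    Tendsto (fun ρ : ℝ =>
        ∫ x in Set.Ioi (0:ℝ), ∫ y in Set.Ioi (0:ℝ),
          (if (1 + β * ρ * y / ((ρ / η) * x + 1)) * (1 + β * ρ * y) ≤ 1 + ρ * y
            then Real.exp (-(x + y)) else 0))
      atTop (nhds ((1 - β) / (β ^ 2 * η + (1 - β)))) := by
  have hexponent : Tendsto (fun ρ : ℝ => -((1 - 2 * β) / (β ^ 2 * ρ))) atTop (nhds 0) := by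
    simpa using ((tendsto_const_nhds (x := 1 - 2 * β)).div_atTop
      (tendsto_id.const_mul_atTop (pow_pos hβ0 2))).neg
  have hlim := (tendsto_exp_nhds_zero_nhds_one.comp hexponent).div_const
    (1 + (1 - β) / (β ^ 2 * η)) |>.const_sub 1
  have hvalue : 1 - 1 / (1 + (1 - β) / (β ^ 2 * η)) = (1 - β) / (β ^ 2 * η + (1 - β)) := by
    have : β ^ 2 * η + (1 - β) ≠ 0 := by nlinarith [sq_nonneg β]
    field_simp
    ring
  rw [← hvalue]
  refine hlim.congr' ?_
  filter_upwards [eventually_gt_atTop 0] with ρ hρ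
  exact (fsic_failure_probability_eq hβ0 hβ1 hη hρ).symm
end

section
/- Let 0 < β < 1/2, ρ_m, ρ_n > 0, α_m > 0, and set z1 = 1 + (1-β)ρ_m/(β²ρ_n), z2 = (1-2β)/(β²ρ_n), A = ρ_m/(α_m β ρ_n), B = 1 + (1/α_m − ρ_m)/(βρ_n), Ψ(x) = ((1-β)(1+ρ_m x) − β)/(β²ρ_n), Ω(x) = (x/α_m − 1)(1+ρ_m x)/(βρ_n), and G(a,b) = e^{1/(βρ_n) + B²/(4A)}·(√π/(2√A))·(erf(√A·(a + B/(2A))) − erf(√A·(b + B/(2A)))). Let x₂ = ((α_mρ_m/β − 1) + √((α_mρ_m/β − 1)² + 4α_mρ_m(1-β)/β))/(2ρ_m). Then ∫_{α_m}^{x₂} ∫_{Ω(x)}^{Ψ(x)} e^{-(x+y)} dy dx = G(x₂, α_m) − (1/z1)·e^{-z2}·(e^{-z1 α_m} − e^{-z1 x₂}). -/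
/-!
The inner integral of `e^{-(x+y)}` in `y` is `e^{-(x+Ω x)} - e^{-(x+Ψ x)}`. Since `Ψ` is affine,
`x + Ψ x = z1 x + z2`, and since `Ω` is quadratic, `x + Ω x = A x² + B x - 1/(βρn)`. The outer
integral therefore splits into an exponential integral, giving the `1/z1` term, and a Gaussian one,
which after completing the square `A x² + B x = (√A (x + B/(2A)))² - B²/(4A)` is a difference of
values of `erf`, giving `G x₂ αm`.
-/

open MeasureTheory Real

/-- The Gauss error function. -/
noncomputable def erf (x : ℝ) : ℝ :=
  (2 / Real.sqrt Real.pi) * ∫ t in (0:ℝ)..x, Real.exp (-t ^ 2)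

lemma integral_exp_neg_sq (a b : ℝ) :
    ∫ t in a..b, exp (-t ^ 2) = √π / 2 * (erf b - erf a) := by
  have integrable : ∀ u v : ℝ, IntervalIntegrable (fun t : ℝ => exp (-t ^ 2)) volume u v :=
    fun u v => (by fun_prop : Continuous fun t : ℝ => exp (-t ^ 2)).intervalIntegrable u v
  rw [← intervalIntegral.integral_interval_sub_left (integrable 0 b) (integrable 0 a), erf, erf]
  field_simp [(sqrt_pos.mpr pi_pos).ne']

lemma integral_exp_neg_quadratic {A : ℝ} (hA : 0 < A) (B c a b : ℝ) :
    ∫ x in a..b, exp (-(A * x ^ 2 + B * x - c))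
      = exp (c + B ^ 2 / (4 * A)) * (√π / (2 * √A))
        * (erf (√A * (b + B / (2 * A))) - erf (√A * (a + B / (2 * A)))) := by
  obtain ⟨s, hs, rfl⟩ : ∃ s : ℝ, 0 < s ∧ A = s ^ 2 :=
    ⟨√A, sqrt_pos.mpr hA, (sq_sqrt hA.le).symm⟩
  rw [sqrt_sq hs.le]
  have complete_square : ∀ x : ℝ, exp (-(s ^ 2 * x ^ 2 + B * x - c))
      = exp (c + B ^ 2 / (4 * s ^ 2)) * exp (-(s * x + B / (2 * s)) ^ 2) := by
    intro x
    rw [← exp_add]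
    congr 1
    field_simp
    ring
  have shift : ∀ t : ℝ, s * t + B / (2 * s) = s * (t + B / (2 * s ^ 2)) := by
    intro t
    field_simp
  simp_rw [complete_square]
  rw [intervalIntegral.integral_const_mul,
    intervalIntegral.integral_comp_mul_add (fun u => exp (-u ^ 2)) hs.ne',
    integral_exp_neg_sq, shift b, shift a, smul_eq_mul]
  field_simp

lemma integral_exp_neg_mul {k : ℝ} (hk : k ≠ 0) (a b : ℝ) :
    ∫ x in a..b, exp (-(k * x)) = (exp (-(k * a)) - exp (-(k * b))) / k := by
  simp_rw [← neg_mul]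
  rw [intervalIntegral.integral_comp_mul_left (fun u => exp u) (neg_ne_zero.mpr hk),
    integral_exp, smul_eq_mul]
  field_simp
  ring

lemma integral_exp_neg_add_right (x c d : ℝ) :
    ∫ y in c..d, exp (-(x + y)) = exp (-(x + c)) - exp (-(x + d)) := by
  simp_rw [neg_add, exp_add]
  rw [intervalIntegral.integral_const_mul,
    intervalIntegral.integral_comp_neg (fun y => exp y), integral_exp, mul_sub]

theorem hsic_pa_P_II21_general
    (β ρm ρn αm : ℝ) (hβ0 : 0 < β) (hβ1 : β < 1/2)
    (hρm : 0 < ρm) (hρn : 0 < ρn) (hαm : 0 < αm)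
    (z1 z2 A B x₂ : ℝ) (Ψ Ω : ℝ → ℝ) (G : ℝ → ℝ → ℝ)
    (hz1 : z1 = 1 + (1 - β) * ρm / (β ^ 2 * ρn))
    (hz2 : z2 = (1 - 2 * β) / (β ^ 2 * ρn))
    (hA : A = ρm / (αm * β * ρn))
    (hB : B = 1 + (1 / αm - ρm) / (β * ρn))
    (hΨ : ∀ x, Ψ x = ((1 - β) * (1 + ρm * x) - β) / (β ^ 2 * ρn))
    (hΩ : ∀ x, Ω x = (x / αm - 1) * (1 + ρm * x) / (β * ρn))
    (hG : ∀ a b, G a b = Real.exp (1 / (β * ρn) + B ^ 2 / (4 * A))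
        * (Real.sqrt Real.pi / (2 * Real.sqrt A))
        * (erf (Real.sqrt A * (a + B / (2 * A)))
            - erf (Real.sqrt A * (b + B / (2 * A))))) :
    (∫ x in αm..x₂, ∫ y in (Ω x)..(Ψ x), Real.exp (-(x + y)))
      = G x₂ αm
        - (1 / z1) * Real.exp (-z2)
          * (Real.exp (-(z1 * αm)) - Real.exp (-(z1 * x₂))) := by
  have hA_pos : 0 < A := by rw [hA]; positivity
  have hz1_pos : 0 < z1 := by
    rw [hz1]
    have : 0 < 1 - β := by linarith
    positivity
  have hΩ_add : ∀ x, x + Ω x = A * x ^ 2 + B * x - 1 / (β * ρn) := by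
    intro x; rw [hΩ, hA, hB]; field_simp; ring
  have hΨ_add : ∀ x, exp (-(x + Ψ x)) = exp (-z2) * exp (-(z1 * x)) := by
    intro x; rw [hΨ, hz1, hz2, ← exp_add]; congr 1; field_simp; ring
  simp_rw [integral_exp_neg_add_right, hΩ_add, hΨ_add]
  rw [intervalIntegral.integral_sub
      ((by fun_prop : Continuous _).intervalIntegrable _ _)
      ((by fun_prop : Continuous _).intervalIntegrable _ _),
    integral_exp_neg_quadratic hA_pos, intervalIntegral.integral_const_mul,
    integral_exp_neg_mul hz1_pos.ne', hG]
  ring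

theorem hsic_pa_P_II21
    (β ρm ρn αm : ℝ) (hβ0 : 0 < β) (hβ1 : β < 1/2)
    (hρm : 0 < ρm) (hρn : 0 < ρn) (hαm : 0 < αm)
    (z1 z2 A B x₂ : ℝ) (Ψ Ω : ℝ → ℝ) (G : ℝ → ℝ → ℝ)
    (hz1 : z1 = 1 + (1 - β) * ρm / (β ^ 2 * ρn))
    (hz2 : z2 = (1 - 2 * β) / (β ^ 2 * ρn))
    (hA : A = ρm / (αm * β * ρn))
    (hB : B = 1 + (1 / αm - ρm) / (β * ρn))
    (hΨ : ∀ x, Ψ x = ((1 - β) * (1 + ρm * x) - β) / (β ^ 2 * ρn))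
    (hΩ : ∀ x, Ω x = (x / αm - 1) * (1 + ρm * x) / (β * ρn))
    (hG : ∀ a b, G a b = Real.exp (1 / (β * ρn) + B ^ 2 / (4 * A))
        * (Real.sqrt Real.pi / (2 * Real.sqrt A))
        * (erf (Real.sqrt A * (a + B / (2 * A)))
            - erf (Real.sqrt A * (b + B / (2 * A)))))
    (hx2 : x₂ = ((αm * ρm / β - 1)
        + Real.sqrt ((αm * ρm / β - 1) ^ 2 + 4 * (αm * ρm) * ((1 - β) / β)))
        / (2 * ρm)) :
    (∫ x in αm..x₂, ∫ y in (Ω x)..(Ψ x), Real.exp (-(x + y)))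
      = G x₂ αm
        - (1 / z1) * Real.exp (-z2)
          * (Real.exp (-(z1 * αm)) - Real.exp (-(z1 * x₂))) :=
  hsic_pa_P_II21_general β ρm ρn αm hβ0 hβ1 hρm hρn hαm z1 z2 A B x₂ Ψ Ω G hz1 hz2 hA hB hΨ hΩ hG
end
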